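/- arXiv:2501.02556 — 2 statements merged into one kernel-verified Lean document; each statement's English description precedes it below -/
import Mathlib

section
/- For α > 1 and c > 0, ∫₁^∞ ln(1 + c·r^{−α}) dr = −ln(1+c) + (αc/(α−1))·₂F₁(1 − 1/α, 1; 2 − 1/α; −c), where ₂F₁ is the Gauss hypergeometric function. -/
/-!
Integrating by parts against `r`, the boundary terms of `r ↦ r log (1 + c r^{-α})` are `0` at
infinity and `-log (1 + c)` at `1`, leaving `∫₁^∞ α c / (r^α + c) dr`. The substitution
`r^α = (1 + c t) / (1 - t)` maps `(0, 1)` onto `(1, ∞)` and turns this integral into `c` times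
Euler's integral `∫₀¹ (1 - t)^{-1/α} (1 + c t)^{1/α - 1} dt`, which is
`₂F₁(1 - 1/α, 1; 2 - 1/α; -c) / (1 - 1/α)`.
-/

open MeasureTheory Real

/-- The Gauss hypergeometric function `₂F₁(a,b;c;z)`, defined (for the parameter
range used here: `c > b > 0`, `z < 1`) by Euler's integral representation,
which agrees with the analytic continuation of the hypergeometric series. -/
noncomputable def gaussHypergeometric (a b c z : ℝ) : ℝ :=
  (Real.Gamma c / (Real.Gamma b * Real.Gamma (c - b))) *
    ∫ t in (0:ℝ)..1, t ^ (b - 1) * (1 - t) ^ (c - b - 1) * (1 - z * t) ^ (-a)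

open Set Filter Topology

theorem gaussHypergeometric_b_eq_one {c : ℝ} (a z : ℝ) (hc : 1 < c) :
    gaussHypergeometric a 1 c z
      = (c - 1) * ∫ t in (0:ℝ)..1, (1 - t) ^ (c - 2) * (1 - z * t) ^ (-a) := by
  have hΓ : Gamma c = (c - 1) * Gamma (c - 1) := by
    simpa using Real.Gamma_add_one (sub_ne_zero.mpr hc.ne')
  have hΓ_ne : Gamma (c - 1) ≠ 0 := (Real.Gamma_pos_of_pos (sub_pos.mpr hc)).ne'
  rw [gaussHypergeometric, hΓ, Gamma_one, one_mul, mul_div_assoc, div_self hΓ_ne, mul_one]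
  congr 1
  refine intervalIntegral.integral_congr fun t _ => ?_
  simp only [sub_self, rpow_zero, one_mul]
  ring_nf

theorem log_one_add_mem_Icc {x : ℝ} (hx : 0 ≤ x) : log (1 + x) ∈ Icc 0 x :=
  ⟨log_nonneg (by linarith), by linarith [log_le_sub_one_of_pos (by linarith : 0 < 1 + x)]⟩

section

variable {α c : ℝ}

theorem integrableOn_Ioi_of_abs_le_rpow_neg {f : ℝ → ℝ} (hα : 1 < α) (hf : Measurable f)
    (K : ℝ) (hle : ∀ r, 1 < r → |f r| ≤ K * r ^ (-α)) : IntegrableOn f (Ioi 1) :=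
  ((integrableOn_Ioi_rpow_of_lt (by linarith) one_pos).const_mul K).mono' hf.aestronglyMeasurable
    ((ae_restrict_iff' measurableSet_Ioi).mpr (Eventually.of_forall hle))

theorem integrableOn_Ioi_log_one_add_mul_rpow_neg (hα : 1 < α) (hc : 0 ≤ c) :
    IntegrableOn (fun r => log (1 + c * r ^ (-α))) (Ioi 1) :=
  integrableOn_Ioi_of_abs_le_rpow_neg hα (by fun_prop) c fun r hr => by
    obtain ⟨h0, hle⟩ := log_one_add_mem_Icc (mul_nonneg hc (rpow_nonneg (by linarith [hr]) (-α)))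
    rwa [abs_of_nonneg h0]

theorem integrableOn_Ioi_div_rpow_add (hα : 1 < α) (hc : 0 ≤ c) (a : ℝ) :
    IntegrableOn (fun r => a / (r ^ α + c)) (Ioi 1) :=
  integrableOn_Ioi_of_abs_le_rpow_neg hα (by fun_prop) |a| fun r hr => by
    have hr0 : 0 < r := zero_lt_one.trans hr
    have hrα : 0 < r ^ α := rpow_pos_of_pos hr0 α
    rw [abs_div, abs_of_pos (by positivity : 0 < r ^ α + c), rpow_neg hr0.le, ← div_eq_mul_inv]
    gcongr
    linarith

theorem hasDerivAt_mul_log_one_add_mul_rpow_neg (hc : 0 ≤ c) {r : ℝ} (hr : 0 < r) :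
    HasDerivAt (fun x => x * log (1 + c * x ^ (-α)))
      (log (1 + c * r ^ (-α)) - α * c / (r ^ α + c)) r := by
  have hrα : 0 < r ^ α := rpow_pos_of_pos hr α
  have hpos : 0 < 1 + c * r ^ (-α) := by positivity
  refine ((hasDerivAt_id' r).mul
    ((((hasDerivAt_rpow_const (p := -α) (Or.inl hr.ne')).const_mul c).const_add 1).log
      hpos.ne')).congr_deriv ?_
  rw [rpow_sub hr, rpow_one, rpow_neg hr.le]
  field_simp
  ring

theorem tendsto_mul_log_one_add_mul_rpow_neg (hα : 1 < α) (hc : 0 ≤ c) :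
    Tendsto (fun r => r * log (1 + c * r ^ (-α))) atTop (𝓝 0) := by
  have hlim : Tendsto (fun r : ℝ => c * r ^ (-(α - 1))) atTop (𝓝 0) := by
    simpa using (tendsto_rpow_neg_atTop (by linarith : 0 < α - 1)).const_mul c
  refine squeeze_zero' ?_ ?_ hlim <;> filter_upwards [eventually_gt_atTop 0] with r hr <;>
    have hlog := log_one_add_mem_Icc (mul_nonneg hc (rpow_nonneg hr.le (-α)))
  · exact mul_nonneg hr.le hlog.1
  · calc r * log (1 + c * r ^ (-α)) ≤ r * (c * r ^ (-α)) := mul_le_mul_of_nonneg_left hlog.2 hr.le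
      _ = c * r ^ (-(α - 1)) := by
          rw [show -(α - 1) = 1 + -α by ring, rpow_add hr, rpow_one]; ring

theorem integral_Ioi_log_one_add_mul_rpow_neg (hα : 1 < α) (hc : 0 ≤ c) :
    ∫ r in Ioi 1, log (1 + c * r ^ (-α))
      = -log (1 + c) + ∫ r in Ioi 1, α * c / (r ^ α + c) := by
  have hlog := integrableOn_Ioi_log_one_add_mul_rpow_neg hα hc
  have hdiv := integrableOn_Ioi_div_rpow_add hα hc (α * c)
  have hparts := integral_Ioi_of_hasDerivAt_of_tendsto'
    (fun r hr => hasDerivAt_mul_log_one_add_mul_rpow_neg hc (zero_lt_one.trans_le hr))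
    (hlog.sub hdiv) (tendsto_mul_log_one_add_mul_rpow_neg hα hc)
  rw [integral_sub hlog hdiv] at hparts
  simp only [one_rpow, mul_one, one_mul, zero_sub] at hparts
  linarith

theorem one_lt_one_add_mul_div_one_sub (hc : -1 < c) {t : ℝ} (ht : t ∈ Ioo 0 1) :
    1 < (1 + c * t) / (1 - t) := by
  rw [one_lt_div (by linarith [ht.2])]
  nlinarith [ht.1]

theorem strictMonoOn_one_add_mul_div_one_sub (hc : -1 < c) :
    StrictMonoOn (fun t => (1 + c * t) / (1 - t)) (Ioo 0 1) := by
  intro t ht s hs hts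
  simp only
  rw [div_lt_div_iff₀ (by linarith [ht.2]) (by linarith [hs.2])]
  nlinarith

theorem hasDerivAt_one_add_mul_div_one_sub {t : ℝ} (ht : t ≠ 1) :
    HasDerivAt (fun t => (1 + c * t) / (1 - t)) ((1 + c) / (1 - t) ^ 2) t := by
  have hne : 1 - t ≠ 0 := sub_ne_zero.mpr (Ne.symm ht)
  refine (((hasDerivAt_id' t).const_mul c).const_add 1 |>.div
    ((hasDerivAt_id' t).const_sub 1) hne).congr_deriv ?_
  field_simp
  ring

theorem image_rpow_one_add_mul_div_one_sub (hα : 0 < α) (hc : -1 < c) :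
    (fun t => ((1 + c * t) / (1 - t)) ^ α⁻¹) '' Ioo 0 1 = Ioi 1 := by
  refine Subset.antisymm ?_ fun r (hr : 1 < r) => ?_
  · rintro _ ⟨t, ht, rfl⟩
    exact one_lt_rpow (one_lt_one_add_mul_div_one_sub hc ht) (inv_pos.mpr hα)
  · have hrα : 1 < r ^ α := one_lt_rpow hr hα
    have hd : 0 < r ^ α + c := by linarith
    refine ⟨(r ^ α - 1) / (r ^ α + c),
      ⟨by apply div_pos <;> linarith, by rw [div_lt_one hd]; linarith⟩, ?_⟩
    have hy : (1 + c * ((r ^ α - 1) / (r ^ α + c))) / (1 - (r ^ α - 1) / (r ^ α + c))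
        = r ^ α := by
      have h1c : 0 < 1 + c := by linarith
      rw [show 1 - (r ^ α - 1) / (r ^ α + c) = (1 + c) / (r ^ α + c) by field_simp; ring]
      field_simp
      ring
    simp only [hy]
    exact rpow_rpow_inv (zero_lt_one.trans hr).le hα.ne'

theorem integral_Ioi_div_rpow_add_eq_intervalIntegral (hα : 0 < α) (hc : -1 < c) :
    ∫ r in Ioi 1, α / (r ^ α + c)
      = ∫ t in (0:ℝ)..1, (1 - t) ^ (-α⁻¹) * (1 + c * t) ^ (α⁻¹ - 1) := by
  set y : ℝ → ℝ := fun t => (1 + c * t) / (1 - t)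
  have hderiv : ∀ t ∈ Ioo (0:ℝ) 1, HasDerivWithinAt (fun t => y t ^ α⁻¹)
      ((1 + c) / (1 - t) ^ 2 * α⁻¹ * y t ^ (α⁻¹ - 1)) (Ioo 0 1) t := fun t ht =>
    ((hasDerivAt_one_add_mul_div_one_sub ht.2.ne).rpow_const
      (Or.inl (zero_lt_one.trans (one_lt_one_add_mul_div_one_sub hc ht)).ne')).hasDerivWithinAt
  have hinj : InjOn (fun t => y t ^ α⁻¹) (Ioo 0 1) :=
    StrictMonoOn.injOn fun t ht s hs hts =>
      rpow_lt_rpow (zero_lt_one.trans (one_lt_one_add_mul_div_one_sub hc ht)).le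
        (strictMonoOn_one_add_mul_div_one_sub hc ht hs hts) (inv_pos.mpr hα)
  rw [intervalIntegral.integral_of_le zero_le_one, integral_Ioc_eq_integral_Ioo,
    ← image_rpow_one_add_mul_div_one_sub hα hc,
    integral_image_eq_integral_abs_deriv_smul measurableSet_Ioo hderiv hinj]
  refine setIntegral_congr_fun measurableSet_Ioo fun t ht => ?_
  have hy : 1 < y t := one_lt_one_add_mul_div_one_sub hc ht
  have hs : 0 < 1 - t := sub_pos.mpr ht.2
  have hyc : y t + c = (1 + c) / (1 - t) := by simp only [y]; field_simp; ring
  have h1c : 0 < 1 + c := by linarith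
  have h1ct : 0 < 1 + c * t := by nlinarith [ht.1, ht.2]
  simp only [smul_eq_mul]
  rw [rpow_inv_rpow (by linarith) hα.ne', hyc, abs_of_pos (by positivity)]
  simp only [y]
  rw [div_rpow h1ct.le hs.le, rpow_sub_one hs.ne', rpow_neg hs.le]
  field_simp

end

/-- Closed form of `∫₁^∞ ln(1 + c·r^{−α}) dr` in terms of `₂F₁`. -/
theorem integral_log_one_add_rpow_neg (α c : ℝ) (hα : 1 < α) (hc : 0 < c) :
    ∫ r in Set.Ioi (1:ℝ), Real.log (1 + c * r ^ (-α))
      = -Real.log (1 + c)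
        + (α * c / (α - 1)) *
          gaussHypergeometric (1 - 1/α) 1 (2 - 1/α) (-c) := by
  have hα0 : 0 < α := zero_lt_one.trans hα
  have hinv : α⁻¹ < 1 := inv_lt_one_of_one_lt₀ hα
  rw [integral_Ioi_log_one_add_mul_rpow_neg hα hc.le,
    gaussHypergeometric_b_eq_one _ _ (by rw [one_div]; linarith)]
  congr 1
  have hintegrand : ∀ t : ℝ, (1 - t) ^ (2 - 1 / α - 2) * (1 - -c * t) ^ (-(1 - 1 / α))
      = (1 - t) ^ (-α⁻¹) * (1 + c * t) ^ (α⁻¹ - 1) := fun t => by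
    rw [show 2 - 1 / α - 2 = -α⁻¹ by ring, show -(1 - 1 / α) = α⁻¹ - 1 by ring,
      show 1 - -c * t = 1 + c * t by ring]
  simp only [hintegrand]
  set I := ∫ t in (0:ℝ)..1, (1 - t) ^ (-α⁻¹) * (1 + c * t) ^ (α⁻¹ - 1)
  calc ∫ r in Ioi 1, α * c / (r ^ α + c) = c * ∫ r in Ioi 1, α / (r ^ α + c) := by
        rw [← integral_const_mul]; simp only [mul_div_assoc', mul_comm c α]
    _ = c * I := by rw [integral_Ioi_div_rpow_add_eq_intervalIntegral hα0 (by linarith)]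
    _ = α * c / (α - 1) * ((2 - 1 / α - 1) * I) := by
        field_simp [(sub_pos.mpr hα).ne']
        ring
end

section
/- For α > 2 and c > 0, ∫₁^∞ r·ln(1 + c·r^{−α}) dr = −(1/2)·ln(1+c) + (αc/(2(α−2)))·₂F₁(1 − 2/α, 1; 2 − 2/α; −c). -/
/-!
Integrating by parts against `r² / 2` turns the logarithm into the rational integrand
`r ^ (1 - α) / (1 + c r ^ (-α))`; the boundary term at infinity vanishes because `α > 2`.
The substitution `u = r ^ (-α)` maps this to `∫₀¹ u ^ (-2/α) / (1 + c u) du`, and the involution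
`u = (1 - t) / (1 + c t)` of `(0, 1)` turns that into Euler's integral for
`₂F₁(1 - 2/α, 1; 2 - 2/α; -c)`, whose Gamma prefactor reduces to `1 - 2/α`.
-/

open MeasureTheory Real

open Set Filter Topology

section IntegrationByParts

variable {α c : ℝ}

lemma one_le_one_add_mul_rpow_neg (hc : 0 ≤ c) {r : ℝ} (hr : 0 < r) :
    1 ≤ 1 + c * r ^ (-α) :=
  le_add_of_nonneg_right (mul_nonneg hc (rpow_nonneg hr.le _))

lemma log_one_add_mul_rpow_neg_le (hc : 0 ≤ c) {r : ℝ} (hr : 0 < r) :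
    log (1 + c * r ^ (-α)) ≤ c * r ^ (-α) := by
  have hpos := zero_lt_one.trans_le (one_le_one_add_mul_rpow_neg (α := α) hc hr)
  linarith [log_le_sub_one_of_pos hpos]

lemma integrableOn_mul_log_one_add_mul_rpow_neg (hα : 2 < α) (hc : 0 ≤ c) :
    IntegrableOn (fun r : ℝ => r * log (1 + c * r ^ (-α))) (Ioi 1) := by
  refine ((integrableOn_Ioi_rpow_of_lt (by linarith : 1 - α < -1) zero_lt_one).const_mul c).mono'
    (by fun_prop) (ae_restrict_of_forall_mem measurableSet_Ioi fun r (hr : 1 < r) => ?_)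
  have hr0 : 0 < r := zero_lt_one.trans hr
  have hlog := log_nonneg (one_le_one_add_mul_rpow_neg (α := α) hc hr0)
  rw [norm_of_nonneg (by positivity), sub_eq_add_neg, rpow_add hr0, rpow_one]
  nlinarith [log_one_add_mul_rpow_neg_le (α := α) hc hr0]

lemma integrableOn_rpow_div_one_add_mul_rpow_neg (hα : 2 < α) (hc : 0 ≤ c) :
    IntegrableOn (fun r : ℝ => r ^ (1 - α) / (1 + c * r ^ (-α))) (Ioi 1) := by
  refine (integrableOn_Ioi_rpow_of_lt (by linarith : 1 - α < -1) zero_lt_one).mono'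
    (by fun_prop : Measurable _).aestronglyMeasurable
    (ae_restrict_of_forall_mem measurableSet_Ioi fun r (hr : 1 < r) => ?_)
  have hr0 : 0 < r := zero_lt_one.trans hr
  have hden := one_le_one_add_mul_rpow_neg (α := α) hc hr0
  rw [norm_of_nonneg (by positivity)]
  exact div_le_self (by positivity) hden

lemma hasDerivAt_sq_div_two_mul_log_one_add_mul_rpow_neg (hc : 0 ≤ c) {r : ℝ} (hr : 0 < r) :
    HasDerivAt (fun r : ℝ => r ^ 2 / 2 * log (1 + c * r ^ (-α)))
      (r * log (1 + c * r ^ (-α)) - α * c / 2 * (r ^ (1 - α) / (1 + c * r ^ (-α)))) r := by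
  have hden := one_le_one_add_mul_rpow_neg (α := α) hc hr
  have hlog : HasDerivAt (fun r : ℝ => log (1 + c * r ^ (-α)))
      (c * (-α * r ^ (-α - 1)) / (1 + c * r ^ (-α))) r :=
    (((hasDerivAt_rpow_const (Or.inl hr.ne')).const_mul c).const_add 1).log (by positivity)
  refine (((hasDerivAt_pow 2 r).div_const 2).mul hlog).congr_deriv ?_
  have hpow : r ^ 2 * r ^ (-α - 1) = r ^ (1 - α) := by
    rw [← rpow_natCast, ← rpow_add hr]; norm_num; ring_nf
  rw [← hpow]
  ring

lemma tendsto_sq_div_two_mul_log_one_add_mul_rpow_neg (hα : 2 < α) (hc : 0 ≤ c) :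
    Tendsto (fun r : ℝ => r ^ 2 / 2 * log (1 + c * r ^ (-α))) atTop (𝓝 0) := by
  have hlim : Tendsto (fun r : ℝ => c / 2 * r ^ (-(α - 2))) atTop (𝓝 0) := by
    simpa using (tendsto_rpow_neg_atTop (by linarith : 0 < α - 2)).const_mul (c / 2)
  refine squeeze_zero' ?_ ?_ hlim <;> filter_upwards [eventually_gt_atTop 0] with r hr
  · have := log_nonneg (one_le_one_add_mul_rpow_neg (α := α) hc hr)
    positivity
  · have hpow : r ^ 2 * r ^ (-α) = r ^ (-(α - 2)) := by
      rw [← rpow_natCast, ← rpow_add hr]; norm_num; ring_nf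
    calc r ^ 2 / 2 * log (1 + c * r ^ (-α)) ≤ r ^ 2 / 2 * (c * r ^ (-α)) := by
          gcongr; exact log_one_add_mul_rpow_neg_le hc hr
      _ = c / 2 * r ^ (-(α - 2)) := by rw [← hpow]; ring

theorem integral_mul_log_one_add_mul_rpow_neg_eq (hα : 2 < α) (hc : 0 ≤ c) :
    ∫ r in Ioi (1:ℝ), r * log (1 + c * r ^ (-α))
      = -(1/2) * log (1 + c)
        + α * c / 2 * ∫ r in Ioi (1:ℝ), r ^ (1 - α) / (1 + c * r ^ (-α)) := by
  have hA := integrableOn_mul_log_one_add_mul_rpow_neg hα hc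
  have hB := integrableOn_rpow_div_one_add_mul_rpow_neg hα hc
  have hFTC := integral_Ioi_of_hasDerivAt_of_tendsto'
    (fun r (hr : 1 ≤ r) => hasDerivAt_sq_div_two_mul_log_one_add_mul_rpow_neg hc
      (zero_lt_one.trans_le hr))
    (hA.sub (hB.const_mul _)) (tendsto_sq_div_two_mul_log_one_add_mul_rpow_neg hα hc)
  rw [integral_sub hA (hB.const_mul _), integral_const_mul] at hFTC
  simp only [one_rpow, one_pow, mul_one] at hFTC
  linarith

end IntegrationByParts

theorem integral_Ioo_zero_one_eq_mul_integral_Ioi_one_comp_rpow_neg {α : ℝ} (hα : 0 < α)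
    (f : ℝ → ℝ) :
    ∫ u in Ioo (0:ℝ) 1, f u = α * ∫ r in Ioi (1:ℝ), r ^ (-α - 1) * f (r ^ (-α)) := by
  have himage : (fun r : ℝ => r ^ (-α)) '' Ioi 1 = Ioo 0 1 := by
    ext u
    constructor
    · rintro ⟨r, hr : 1 < r, rfl⟩
      exact ⟨rpow_pos_of_pos (zero_lt_one.trans hr) _,
        rpow_lt_one_of_one_lt_of_neg hr (by linarith)⟩
    · rintro ⟨hu0, hu1⟩
      refine ⟨u ^ (-α⁻¹), one_lt_rpow_of_pos_of_lt_one_of_neg hu0 hu1 (by simpa), ?_⟩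
      show (u ^ (-α⁻¹)) ^ (-α) = u
      rw [← rpow_mul hu0.le, neg_mul_neg, inv_mul_cancel₀ hα.ne', rpow_one]
  have hderiv : ∀ r ∈ Ioi (1:ℝ),
      HasDerivWithinAt (fun r : ℝ => r ^ (-α)) (-α * r ^ (-α - 1)) (Ioi 1) r :=
    fun r (hr : 1 < r) =>
      (hasDerivAt_rpow_const (Or.inl (zero_lt_one.trans hr).ne')).hasDerivWithinAt
  have hinj : InjOn (fun r : ℝ => r ^ (-α)) (Ioi 1) :=
    ((strictAntiOn_rpow_Ioi_of_exponent_neg (neg_lt_zero.2 hα)).mono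
      (Ioi_subset_Ioi zero_le_one)).injOn
  rw [← himage, integral_image_eq_integral_abs_deriv_smul measurableSet_Ioi hderiv hinj,
    ← integral_const_mul]
  refine setIntegral_congr_fun measurableSet_Ioi fun r (hr : 1 < r) => ?_
  rw [smul_eq_mul, abs_mul, abs_neg, abs_of_pos hα,
    abs_of_pos (rpow_pos_of_pos (zero_lt_one.trans hr) _), mul_assoc]

theorem mul_integral_rpow_div_one_add_mul_rpow_neg {α : ℝ} (hα : 0 < α) (c : ℝ) :
    α * ∫ r in Ioi (1:ℝ), r ^ (1 - α) / (1 + c * r ^ (-α))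
      = ∫ u in Ioo (0:ℝ) 1, u ^ (-(2 / α)) / (1 + c * u) := by
  rw [integral_Ioo_zero_one_eq_mul_integral_Ioi_one_comp_rpow_neg hα]
  congr 1
  refine setIntegral_congr_fun measurableSet_Ioi fun r (hr : 1 < r) => ?_
  have hr0 : 0 < r := zero_lt_one.trans hr
  rw [← rpow_mul hr0.le, neg_mul_neg, mul_div_cancel₀ _ hα.ne', mul_div_assoc', ← rpow_add hr0]
  ring_nf

lemma one_add_mul_pos_of_mem_Ioo {c t : ℝ} (hc : -1 < c) (ht : t ∈ Ioo (0:ℝ) 1) :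
    0 < 1 + c * t := by
  nlinarith [mul_pos ht.1 (by linarith : 0 < 1 + c), ht.2]

theorem integral_Ioo_div_one_add_mul_eq {c : ℝ} (hc : -1 < c) (g : ℝ → ℝ) :
    ∫ u in Ioo (0:ℝ) 1, g u / (1 + c * u)
      = ∫ t in Ioo (0:ℝ) 1, g ((1 - t) / (1 + c * t)) / (1 + c * t) := by
  set φ : ℝ → ℝ := fun t => (1 - t) / (1 + c * t) with hφ
  have hden : ∀ t ∈ Ioo (0:ℝ) 1, 0 < 1 + c * t := fun t ht => one_add_mul_pos_of_mem_Ioo hc ht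
  have hmaps : MapsTo φ (Ioo 0 1) (Ioo 0 1) := fun t ht =>
    ⟨div_pos (by linarith [ht.2]) (hden t ht),
      (div_lt_one (hden t ht)).2 (by nlinarith [mul_pos ht.1 (by linarith : 0 < 1 + c)])⟩
  have hone_add : ∀ t ∈ Ioo (0:ℝ) 1, 1 + c * φ t = (1 + c) / (1 + c * t) := fun t ht => by
    have := hden t ht
    simp only [hφ]
    field_simp
    ring
  have hinvol : ∀ t ∈ Ioo (0:ℝ) 1, φ (φ t) = t := fun t ht => by
    have h1 : 1 + c * t ≠ 0 := (hden t ht).ne'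
    have h2 : 1 + c ≠ 0 := by linarith
    change (1 - φ t) / (1 + c * φ t) = t
    rw [hone_add t ht, one_sub_div h1, div_div_div_cancel_right₀ h1, div_eq_iff h2]
    ring
  have hderiv : ∀ t ∈ Ioo (0:ℝ) 1,
      HasDerivWithinAt φ (-(1 + c) / (1 + c * t) ^ 2) (Ioo 0 1) t := fun t ht => by
    refine ((((hasDerivAt_id' t).const_sub 1).fun_div
      (((hasDerivAt_id' t).const_mul c).const_add 1) (hden t ht).ne').congr_deriv
      ?_).hasDerivWithinAt
    ring
  have himage : φ '' Ioo 0 1 = Ioo 0 1 :=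
    (hmaps.image_subset).antisymm fun t ht => ⟨φ t, hmaps ht, hinvol t ht⟩
  conv_lhs => rw [← himage]
  rw [integral_image_eq_integral_abs_deriv_smul measurableSet_Ioo hderiv
    (fun x hx y hy h => by rw [← hinvol x hx, ← hinvol y hy, h])]
  refine setIntegral_congr_fun measurableSet_Ioo fun t ht => ?_
  have ht' := hden t ht
  have hc' : 0 < 1 + c := by linarith
  rw [smul_eq_mul, hone_add t ht, abs_div, abs_neg, abs_of_pos hc', abs_of_pos (by positivity)]
  field_simp
  rfl

theorem integral_rpow_sub_one_div_one_add_mul_eq {c : ℝ} (hc : -1 < c) (a : ℝ) :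
    ∫ u in Ioo (0:ℝ) 1, u ^ (a - 1) / (1 + c * u)
      = ∫ t in Ioo (0:ℝ) 1, (1 - t) ^ (a - 1) * (1 + c * t) ^ (-a) := by
  rw [integral_Ioo_div_one_add_mul_eq hc]
  refine setIntegral_congr_fun measurableSet_Ioo fun t ht => ?_
  have hden := one_add_mul_pos_of_mem_Ioo hc ht
  rw [div_rpow (by linarith [ht.2]) hden.le, div_div, ← rpow_add_one hden.ne', sub_add_cancel,
    rpow_neg hden.le, div_eq_mul_inv]

theorem gaussHypergeometric_one_add_one {a : ℝ} (ha : 0 < a) (z : ℝ) :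
    gaussHypergeometric a 1 (a + 1) z
      = a * ∫ t in Ioo (0:ℝ) 1, (1 - t) ^ (a - 1) * (1 - z * t) ^ (-a) := by
  rw [gaussHypergeometric, intervalIntegral.integral_of_le zero_le_one,
    integral_Ioc_eq_integral_Ioo, Gamma_add_one ha.ne', Gamma_one, one_mul, add_sub_cancel_right,
    mul_div_cancel_right₀ _ (Gamma_pos_of_pos ha).ne']
  simp only [sub_self, rpow_zero, one_mul]

/-- Closed form of `∫₁^∞ r·ln(1 + c·r^{−α}) dr` in terms of `₂F₁`. -/
theorem integral_mul_log_one_add_rpow_neg (α c : ℝ) (hα : 2 < α) (hc : 0 < c) :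
    ∫ r in Set.Ioi (1:ℝ), r * Real.log (1 + c * r ^ (-α))
      = -(1/2) * Real.log (1 + c)
        + (α * c / (2 * (α - 2))) *
          gaussHypergeometric (1 - 2/α) 1 (2 - 2/α) (-c) := by
  have hα0 : 0 < α := by linarith
  have ha : 0 < 1 - 2 / α := by rw [sub_pos, div_lt_one hα0]; linarith
  have hF : gaussHypergeometric (1 - 2 / α) 1 (2 - 2 / α) (-c)
      = (1 - 2 / α) * ∫ u in Ioo (0:ℝ) 1, u ^ (-(2 / α)) / (1 + c * u) := by
    rw [show (2:ℝ) - 2 / α = 1 - 2 / α + 1 by ring, gaussHypergeometric_one_add_one ha,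
      show -(2 / α) = 1 - 2 / α - 1 by ring, integral_rpow_sub_one_div_one_add_mul_eq (by linarith)]
    simp only [neg_mul, sub_neg_eq_add]
  rw [integral_mul_log_one_add_mul_rpow_neg_eq hα hc.le, hF,
    ← mul_integral_rpow_div_one_add_mul_rpow_neg hα0]
  have : α - 2 ≠ 0 := by linarith
  field_simp
end
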